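/- Let X be a nonempty compact metric space on which the isometry group acts transitively. Then there is exactly one Borel probability measure on X invariant under every surjective isometry of X. -/

import Mathlib

/-!
With the uniform metric, the isometries of a compact metric space form a compact group:
isometric self-maps of a compact space are onto, so by Arzelà–Ascoli they form a compact subset
of `C(X, X)`, and the uniform metric is invariant under composition on either side. This group
carries a Haar probability measure `m`, which is also right invariant, and the image of `m` under
an orbit map `g ↦ g x₀` is an invariant probability measure. For uniqueness, push `m × μ` forward
along the action `(g, x) ↦ g x`: integrating in `g` first, the invariance of `μ` gives `μ`;
integrating in `x` first, transitivity and the right invariance of `m` give the image of `m`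
under the orbit map.
-/

open Set Function Metric MeasureTheory Measure

theorem Isometry.surjective_of_compactSpace {X : Type*} [MetricSpace X] [CompactSpace X]
    {f : X → X} (hf : Isometry f) : Surjective f := by
  intro y
  by_contra! hy
  have hyr : y ∉ range f := fun ⟨x, hx⟩ => hy x hx
  have hclosed : IsClosed (range f) := (isCompact_range hf.continuous).isClosed
  have hε : 0 < infDist y (range f) :=
    (hclosed.notMem_iff_infDist_pos ⟨f y, mem_range_self y⟩).1 hyr
  have hiter (n : ℕ) : Isometry f^[n] := Nat.rec isometry_id (fun _ h => h.comp hf) n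
  -- the orbit of `y` is `infDist y (range f)`-separated, which compactness forbids
  obtain ⟨x, -, φ, hφ, hlim⟩ := isCompact_univ.tendsto_subseq fun n => mem_univ (f^[n] y)
  obtain ⟨N, hN⟩ := Metric.cauchySeq_iff.1 hlim.cauchySeq _ hε
  obtain ⟨k, hk⟩ := Nat.exists_eq_add_of_lt (hφ N.lt_succ_self)
  have hsep : dist (f^[φ N] y) (f^[φ (N + 1)] y) = dist y (f (f^[k] y)) := by
    rw [hk, add_assoc, iterate_add_apply, (hiter _).dist_eq, ← iterate_succ_apply' f k]
  have := hN N le_rfl (N + 1) N.le_succ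
  simp only [comp_apply, hsep] at this
  exact (infDist_le_dist_of_mem (mem_range_self _)).not_gt this

theorem isTopologicalGroup_of_isIsometricSMul (G : Type*) [Group G] [PseudoMetricSpace G]
    [IsIsometricSMul G G] [IsIsometricSMul Gᵐᵒᵖ G] : IsTopologicalGroup G where
  continuous_mul := by
    refine (LipschitzWith.of_dist_le_mul fun p q => ?_ : LipschitzWith 2 _).continuous
    calc dist (p.1 * p.2) (q.1 * q.2)
        ≤ dist (p.1 * p.2) (q.1 * p.2) + dist (q.1 * p.2) (q.1 * q.2) := dist_triangle _ _ _
      _ = dist p.1 q.1 + dist p.2 q.2 := by rw [dist_mul_right, dist_mul_left]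
      _ ≤ 2 * dist p q := by
        rw [Prod.dist_eq, two_mul]; exact add_le_add (le_max_left _ _) (le_max_right _ _)
  continuous_inv := isometry_inv.continuous

theorem ContinuousMap.isCompact_setOf_isometry {X Y : Type*} [MetricSpace X] [CompactSpace X]
    [MetricSpace Y] [CompactSpace Y] : IsCompact {f : C(X, Y) | Isometry f} := by
  refine ArzelaAscoli.isCompact_of_equicontinuous _ ?_ ?_
  · have himage : ContinuousMap.toFun '' {f : C(X, Y) | Isometry f} = {g | Isometry g} :=
      Subset.antisymm (image_subset_iff.2 fun f hf => hf)
        fun g hg => ⟨⟨g, hg.continuous⟩, hg, rfl⟩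
    rw [himage]
    refine IsClosed.isCompact ?_
    simp only [isometry_iff_dist_eq, ofPred_forall]
    exact isClosed_iInter fun x => isClosed_iInter fun y =>
      isClosed_eq (by fun_prop) continuous_const
  · exact fun x₀ => Metric.equicontinuousAt_iff.2 fun ε hε =>
      ⟨ε, hε, fun x hx f => by rwa [f.2.dist_eq, dist_comm]⟩

namespace IsometryEquiv

variable {X : Type*} [MetricSpace X] [CompactSpace X]

noncomputable instance : MetricSpace (X ≃ᵢ X) :=
  MetricSpace.induced (fun f => (f : C(X, X))) (fun _ _ h => ext (DFunLike.congr_fun h ·))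
    inferInstance

theorem isometry_toContinuousMap : Isometry fun f : X ≃ᵢ X => (f : C(X, X)) :=
  Isometry.of_dist_eq fun _ _ => rfl

theorem range_toContinuousMap :
    range (fun f : X ≃ᵢ X => (f : C(X, X))) = {f : C(X, X) | Isometry f} :=
  Subset.antisymm (range_subset_iff.2 fun f => f.isometry) fun f hf =>
    ⟨⟨Equiv.ofBijective f ⟨hf.injective, hf.surjective_of_compactSpace⟩, hf⟩, rfl⟩

instance : CompactSpace (X ≃ᵢ X) := by
  rw [← isCompact_univ_iff, isometry_toContinuousMap.isEmbedding.isCompact_iff, image_univ,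
    range_toContinuousMap]
  exact ContinuousMap.isCompact_setOf_isometry

theorem dist_eq_iSup (f g : X ≃ᵢ X) : dist f g = ⨆ x, dist (f x) (g x) :=
  ContinuousMap.dist_eq_iSup

instance : IsIsometricSMul (X ≃ᵢ X) (X ≃ᵢ X) where
  isometry_smul h := Isometry.of_dist_eq fun f g => by
    simp only [smul_eq_mul, dist_eq_iSup, mul_apply, h.dist_eq]

instance : IsIsometricSMul (X ≃ᵢ X)ᵐᵒᵖ (X ≃ᵢ X) where
  isometry_smul h := Isometry.of_dist_eq fun f g => by
    simp only [MulOpposite.smul_eq_mul_unop, dist_eq_iSup, mul_apply]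
    exact h.unop.surjective.iSup_comp fun x => dist (f x) (g x)

instance : IsTopologicalGroup (X ≃ᵢ X) := isTopologicalGroup_of_isIsometricSMul _

instance applyMulAction : MulAction (X ≃ᵢ X) X where
  smul f x := f x
  one_smul _ := rfl
  mul_smul _ _ _ := rfl

instance : ContinuousEval (X ≃ᵢ X) X X :=
  .of_continuous_forget isometry_toContinuousMap.continuous

instance : ContinuousSMul (X ≃ᵢ X) X := ⟨continuous_eval⟩

end IsometryEquiv

namespace MeasureTheory

theorem Measure.isMulRightInvariant_of_isProbabilityMeasure {G : Type*} [Group G]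
    [TopologicalSpace G] [IsTopologicalGroup G] [LocallyCompactSpace G] [MeasurableSpace G]
    [BorelSpace G] (m : Measure G) [IsHaarMeasure m] [IsProbabilityMeasure m] :
    IsMulRightInvariant m where
  map_mul_right_eq_self g := by
    have : IsProbabilityMeasure (m.map (· * g)) :=
      isProbabilityMeasure_map (measurable_mul_const g).aemeasurable
    exact isHaarMeasure_eq_of_isProbabilityMeasure _ m

variable {G X : Type*} [Group G] [MeasurableSpace G] [MeasurableSpace X] [MulAction G X]

theorem smulInvariantMeasure_map_smul_const [MeasurableSMul G X] (m : Measure G)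
    [m.IsMulLeftInvariant] (x₀ : X) : SMulInvariantMeasure G X (m.map (· • x₀)) :=
  smulInvariantMeasure_map m _ (fun g h => mul_smul g h x₀) (measurable_smul_const x₀)

theorem map_smul_smul_eq_map_smul [MeasurableMul G] [MeasurableSMul G X] (m : Measure G)
    [m.IsMulRightInvariant] (h : G) (x : X) :
    m.map (· • h • x) = m.map (· • x) := by
  have hcomp : (· • h • x) = (· • x) ∘ (· * h) := funext fun g => (mul_smul g h x).symm
  rw [hcomp, ← map_map (measurable_smul_const x) (measurable_mul_const h),
    map_mul_right_eq_self]

variable [MeasurableSMul₂ G X]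

theorem map_smul_prod_eq_of_smulInvariantMeasure (m : Measure G) [IsProbabilityMeasure m]
    (μ : Measure X) [SFinite μ] [SMulInvariantMeasure G X μ] :
    (m.prod μ).map (fun p => p.1 • p.2) = μ := by
  ext A hA
  have hsmul : Measurable fun p : G × X => p.1 • p.2 := measurable_fst.smul measurable_snd
  rw [map_apply hsmul hA, Measure.prod_apply (hsmul hA)]
  simp only [preimage_preimage, measure_preimage_smul, lintegral_const, measure_univ, mul_one]

theorem map_smul_prod_eq_map_smul [MeasurableMul G] [MulAction.IsPretransitive G X]
    (m : Measure G) [SFinite m] [m.IsMulRightInvariant] (μ : Measure X) [IsProbabilityMeasure μ]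
    (x₀ : X) :
    (m.prod μ).map (fun p => p.1 • p.2) = m.map (· • x₀) := by
  ext A hA
  have hsmul : Measurable fun p : G × X => p.1 • p.2 := measurable_fst.smul measurable_snd
  have horbit (x : X) : m ((· • x) ⁻¹' A) = m.map (· • x₀) A := by
    obtain ⟨h, rfl⟩ := MulAction.exists_smul_eq G x₀ x
    rw [← map_smul_smul_eq_map_smul m h, map_apply (measurable_smul_const _) hA]
  rw [map_apply hsmul hA, prod_apply_symm (hsmul hA)]
  simp only [preimage_preimage, horbit, lintegral_const, measure_univ, mul_one]

end MeasureTheory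

theorem MulAction.existsUnique_smulInvariant_probabilityMeasure (G X : Type*) [Group G]
    [TopologicalSpace G] [IsTopologicalGroup G] [CompactSpace G] [MeasurableSpace G]
    [BorelSpace G] [MeasurableSpace X] [Nonempty X] [MulAction G X] [MeasurableSMul₂ G X]
    [MulAction.IsPretransitive G X] :
    ∃! μ : ProbabilityMeasure X, SMulInvariantMeasure G X μ := by
  obtain ⟨m, _, _⟩ : ∃ m : Measure G, m.IsHaarMeasure ∧ IsProbabilityMeasure m :=
    ⟨haarMeasure ⊤, inferInstance, ⟨by simpa using haarMeasure_self (G := G) (K₀ := ⊤)⟩⟩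
  have := isMulRightInvariant_of_isProbabilityMeasure m
  let x₀ : X := Classical.arbitrary X
  have : IsProbabilityMeasure (m.map (· • x₀)) :=
    isProbabilityMeasure_map (measurable_smul_const x₀).aemeasurable
  refine ⟨⟨m.map (· • x₀), this⟩, smulInvariantMeasure_map_smul_const m x₀, fun μ hμ => ?_⟩
  apply Subtype.ext
  calc (μ : Measure X) = ((m.prod μ).map fun p => p.1 • p.2) :=
        (map_smul_prod_eq_of_smulInvariantMeasure m (μ : Measure X)).symm
    _ = m.map (· • x₀) := map_smul_prod_eq_map_smul m μ x₀

/-- Let X be a nonempty compact metric space on which the isometry group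
acts transitively. Then there is exactly one Borel probability measure on X invariant
under every surjective isometry of X. -/
theorem unique_invariant_measure_of_transitive {X : Type*} [MetricSpace X]
    [CompactSpace X] [Nonempty X] [MeasurableSpace X] [BorelSpace X]
    (htrans : ∀ x y : X, ∃ Φ : X ≃ᵢ X, Φ x = y) :
    ∃! μ : ProbabilityMeasure X,
      ∀ Φ : X ≃ᵢ X, (μ : Measure X).map Φ = (μ : Measure X) := by
  have : MulAction.IsPretransitive (X ≃ᵢ X) X := ⟨htrans⟩
  borelize (X ≃ᵢ X)
  have hinv (μ : ProbabilityMeasure X) :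
      SMulInvariantMeasure (X ≃ᵢ X) X μ ↔ ∀ Φ : X ≃ᵢ X, (μ : Measure X).map Φ = μ :=
    (smulInvariantMeasure_tfae (X ≃ᵢ X) (μ : Measure X)).out 0 5
  simpa only [hinv] using MulAction.existsUnique_smulInvariant_probabilityMeasure (X ≃ᵢ X) X
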